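/- arXiv:2504.00952 — 2 statements merged into one kernel-verified Lean document; each statement's English description precedes it below -/
import Mathlib

section
/- The Gaussian mechanism A(D) = q(D) + z with z ~ N(0, σ² I) satisfies (γ, γ S₂²/(2σ²))-Rényi differential privacy for every γ > 1, where S₂ = sup over adjacent datasets D, D' of ‖q(D) - q(D')‖₂. -/
open MeasureTheory ProbabilityTheory

/-- Isotropic Gaussian measure `N(μ, v·I)` on `ℝ^n`. -/
noncomputable def gaussianVec (n : ℕ) (μ : EuclideanSpace ℝ (Fin n)) (v : ℝ) :
    Measure (EuclideanSpace ℝ (Fin n)) :=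
  Measure.map (⇑(EuclideanSpace.equiv (Fin n) ℝ).symm)
    (Measure.pi fun i => gaussianReal (μ i) v.toNNReal)

/-- Rényi divergence of order `γ`. -/
noncomputable def renyiDiv {Ω : Type*} [MeasurableSpace Ω] (γ : ℝ) (P Q : Measure Ω) : ℝ :=
  (γ - 1)⁻¹ * Real.log (∫ x, (P.rnDeriv Q x).toReal ^ γ ∂Q)

/-- `(γ,ρ)`-Rényi differential privacy. -/
def RDP {D Ω : Type*} [MeasurableSpace Ω] (A : D → Measure Ω) (adj : D → D → Prop)
    (γ ρ : ℝ) : Prop :=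
  ∀ d d', adj d d' → renyiDiv γ (A d) (A d') ≤ ρ

/-! The Radon–Nikodym derivative of `N(a, vI)` with respect to `N(b, vI)` is the product of the
one-dimensional density ratios, so the Rényi moment `∫ (dP/dQ)^γ dQ` factorises over coordinates.
In one dimension, completing the square gives
`(p_a / p_b)^γ p_b = exp (γ(γ-1)(a-b)²/(2v)) p_{b+γ(a-b)}`, so each factor equals
`exp (γ(γ-1)(aᵢ-bᵢ)²/(2v))` and `D_γ(N(a, vI) ‖ N(b, vI)) = γ‖a-b‖²/(2v)`. -/

open scoped NNReal ENNReal

namespace MeasureTheory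

variable {α : Type*} [MeasurableSpace α]

theorem lintegral_fin_nat_prod_eq_prod {n : ℕ} {μ : Fin n → Measure α} [∀ i, SigmaFinite (μ i)]
    {f : Fin n → α → ℝ≥0∞} (hf : ∀ i, Measurable (f i)) :
    ∫⁻ x, ∏ i, f i (x i) ∂Measure.pi μ = ∏ i, ∫⁻ t, f i t ∂μ i := by
  induction n with
  | zero => simp
  | succ n ih =>
    calc
      _ = ∫⁻ x : α × (Fin n → α), f 0 x.1 * ∏ i : Fin n, f i.succ (x.2 i)
          ∂(μ 0).prod (Measure.pi fun i ↦ μ i.succ) := by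
        rw [← (measurePreserving_piFinSuccAbove μ 0).symm.lintegral_comp_emb
          (MeasurableEquiv.measurableEmbedding _)]
        simp_rw [MeasurableEquiv.piFinSuccAbove_symm_apply, Fin.insertNthEquiv,
          Fin.prod_univ_succ, Fin.insertNth_zero, Equiv.coe_fn_mk, Fin.cons_succ,
          Fin.zero_succAbove, cast_eq, Fin.cons_zero]
      _ = (∫⁻ t, f 0 t ∂μ 0) * ∏ i : Fin n, ∫⁻ t, f i.succ t ∂μ i.succ := by
        rw [← ih fun i ↦ hf i.succ, ← lintegral_prod_mul (hf 0).aemeasurable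
          (Finset.measurable_prod _ fun i _ ↦ (hf i.succ).comp (measurable_pi_apply i)).aemeasurable]
      _ = ∏ i, ∫⁻ t, f i t ∂μ i := by rw [Fin.prod_univ_succ]

variable {ι : Type*} [Fintype ι]

theorem lintegral_fintype_prod_eq_prod {μ : ι → Measure α} [∀ i, SigmaFinite (μ i)]
    {f : ι → α → ℝ≥0∞} (hf : ∀ i, Measurable (f i)) :
    ∫⁻ x, ∏ i, f i (x i) ∂Measure.pi μ = ∏ i, ∫⁻ t, f i t ∂μ i := by
  let e := (Fintype.equivFin ι).symm
  rw [← (measurePreserving_piCongrLeft _ e).lintegral_comp_emb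
    (MeasurableEquiv.measurableEmbedding _)]
  simp_rw [← e.prod_comp, MeasurableEquiv.coe_piCongrLeft, Equiv.piCongrLeft_apply_apply]
  exact lintegral_fin_nat_prod_eq_prod fun i ↦ hf (e i)

theorem Measure.pi_withDensity {μ : ι → Measure α} [∀ i, SigmaFinite (μ i)]
    {f : ι → α → ℝ≥0∞} (hf : ∀ i, Measurable (f i))
    [∀ i, SigmaFinite ((μ i).withDensity (f i))] :
    Measure.pi (fun i ↦ (μ i).withDensity (f i))
      = (Measure.pi μ).withDensity fun x ↦ ∏ i, f i (x i) := by
  refine Measure.pi_eq fun s hs ↦ ?_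
  have hbox : (Set.univ.pi s).indicator (fun x ↦ ∏ i, f i (x i))
      = fun x ↦ ∏ i, (s i).indicator (f i) (x i) := by
    ext x
    classical simp [Set.indicator, Finset.prod_ite_zero]
  rw [withDensity_apply _ (.univ_pi hs), ← lintegral_indicator (.univ_pi hs), hbox,
    lintegral_fintype_prod_eq_prod fun i ↦ (hf i).indicator (hs i)]
  simp_rw [lintegral_indicator (hs _), withDensity_apply _ (hs _)]

variable {μ ν : ι → Measure α} [∀ i, SigmaFinite (μ i)] [∀ i, SigmaFinite (ν i)]

theorem Measure.rnDeriv_pi (hμν : ∀ i, μ i ≪ ν i) :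
    (Measure.pi μ).rnDeriv (Measure.pi ν)
      =ᵐ[Measure.pi ν] fun x ↦ ∏ i, (μ i).rnDeriv (ν i) (x i) := by
  have : ∀ i, SigmaFinite ((ν i).withDensity ((μ i).rnDeriv (ν i))) := fun i ↦ by
    rw [Measure.withDensity_rnDeriv_eq _ _ (hμν i)]
    infer_instance
  have hpi : Measure.pi μ
      = (Measure.pi ν).withDensity fun x ↦ ∏ i, (μ i).rnDeriv (ν i) (x i) := by
    rw [← Measure.pi_withDensity fun i ↦ Measure.measurable_rnDeriv _ _]
    simp_rw [Measure.withDensity_rnDeriv_eq _ _ (hμν _)]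
  rw [hpi]
  exact Measure.rnDeriv_withDensity _ <|
    Finset.measurable_prod _ fun i _ ↦ (Measure.measurable_rnDeriv _ _).comp (measurable_pi_apply i)

theorem integral_rnDeriv_pi_rpow (hμν : ∀ i, μ i ≪ ν i) (γ : ℝ) :
    ∫ x, ((Measure.pi μ).rnDeriv (Measure.pi ν) x).toReal ^ γ ∂Measure.pi ν
      = ∏ i, ∫ t, ((μ i).rnDeriv (ν i) t).toReal ^ γ ∂ν i := by
  rw [← integral_fintype_prod_eq_prod]
  refine integral_congr_ae ?_
  filter_upwards [Measure.rnDeriv_pi hμν] with x hx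
  rw [hx, ENNReal.toReal_prod, Real.finsetProd_rpow _ _ fun i _ ↦ ENNReal.toReal_nonneg]

end MeasureTheory

namespace ProbabilityTheory

open Real

theorem rnDeriv_gaussianReal_gaussianReal (a b : ℝ) {v : ℝ≥0} (hv : v ≠ 0) :
    (gaussianReal a v).rnDeriv (gaussianReal b v)
      =ᵐ[gaussianReal b v] fun t ↦ gaussianPDF a v t / gaussianPDF b v t := by
  have hac := gaussianReal_absolutelyContinuous b hv
  filter_upwards [Measure.rnDeriv_eq_div (gaussianReal_absolutelyContinuous a hv) hac,
    hac (rnDeriv_gaussianReal a v), hac (rnDeriv_gaussianReal b v)] with t ht ha hb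
  rw [ht, ha, hb]

theorem gaussianPDFReal_div_rpow_mul (a b : ℝ) {v : ℝ≥0} (hv : v ≠ 0) (γ t : ℝ) :
    (gaussianPDFReal a v t / gaussianPDFReal b v t) ^ γ * gaussianPDFReal b v t
      = exp (γ * (γ - 1) * (a - b) ^ 2 / (2 * v)) * gaussianPDFReal (b + γ * (a - b)) v t := by
  have hv' : (0 : ℝ) < v := by positivity
  have hC : 0 < (√(2 * π * v))⁻¹ := by positivity
  simp only [gaussianPDFReal]
  rw [mul_div_mul_left _ _ hC.ne', ← exp_sub, rpow_def_of_pos (exp_pos _), log_exp,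
    mul_left_comm, ← exp_add, mul_left_comm, ← exp_add]
  congr 2
  field_simp
  ring

theorem integral_rnDeriv_gaussianReal_rpow (a b : ℝ) {v : ℝ≥0} (hv : v ≠ 0) (γ : ℝ) :
    ∫ t, ((gaussianReal a v).rnDeriv (gaussianReal b v) t).toReal ^ γ ∂gaussianReal b v
      = exp (γ * (γ - 1) * (a - b) ^ 2 / (2 * v)) := by
  calc
    _ = ∫ t, (gaussianPDFReal a v t / gaussianPDFReal b v t) ^ γ ∂gaussianReal b v := by
      refine integral_congr_ae ?_
      filter_upwards [rnDeriv_gaussianReal_gaussianReal a b hv] with t ht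
      rw [ht, ENNReal.toReal_div, gaussianPDF, gaussianPDF,
        ENNReal.toReal_ofReal (gaussianPDFReal_nonneg _ _ _),
        ENNReal.toReal_ofReal (gaussianPDFReal_nonneg _ _ _)]
    _ = ∫ t, exp (γ * (γ - 1) * (a - b) ^ 2 / (2 * v)) * gaussianPDFReal (b + γ * (a - b)) v t := by
      rw [integral_gaussianReal_eq_integral_smul hv]
      simp_rw [smul_eq_mul, mul_comm (gaussianPDFReal b v _), gaussianPDFReal_div_rpow_mul a b hv]
    _ = exp (γ * (γ - 1) * (a - b) ^ 2 / (2 * v)) := by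
      rw [integral_const_mul, integral_gaussianPDFReal_eq_one _ hv, mul_one]

end ProbabilityTheory

theorem renyiDiv_map_measurableEquiv {Ω Ω' : Type*} [MeasurableSpace Ω] [MeasurableSpace Ω']
    (e : Ω ≃ᵐ Ω') (γ : ℝ) (P Q : Measure Ω) [SigmaFinite P] [SigmaFinite Q] :
    renyiDiv γ (P.map e) (Q.map e) = renyiDiv γ P Q := by
  rw [renyiDiv, renyiDiv, integral_map_equiv]
  congr 2
  refine integral_congr_ae ?_
  filter_upwards [e.measurableEmbedding.rnDeriv_map P Q] with x hx
  rw [hx]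

theorem renyiDiv_gaussianVec (n : ℕ) (a b : EuclideanSpace ℝ (Fin n)) {v : ℝ} (hv : 0 < v)
    {γ : ℝ} (hγ : γ ≠ 1) :
    renyiDiv γ (gaussianVec n a v) (gaussianVec n b v) = γ * ‖a - b‖ ^ 2 / (2 * v) := by
  have hv' : v.toNNReal ≠ 0 := (Real.toNNReal_pos.mpr hv).ne'
  have hγ' : γ - 1 ≠ 0 := sub_ne_zero.mpr hγ
  refine (renyiDiv_map_measurableEquiv (MeasurableEquiv.toLp 2 (Fin n → ℝ)) γ _ _).trans ?_
  rw [renyiDiv, integral_rnDeriv_pi_rpow fun i ↦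
    (gaussianReal_absolutelyContinuous _ hv').trans (gaussianReal_absolutelyContinuous' _ hv')]
  simp_rw [integral_rnDeriv_gaussianReal_rpow _ _ hv', Real.coe_toNNReal _ hv.le,
    ← Real.exp_sum, Real.log_exp, EuclideanSpace.real_norm_sq_eq, PiLp.sub_apply,
    ← Finset.sum_div, ← Finset.mul_sum]
  field_simp

/-- The Gaussian mechanism `A(D) = q(D) + z`, `z ~ N(0, σ²I)`, with `ℓ₂`-sensitivity
bound `S₂` over adjacent datasets, satisfies `(γ, γ S₂²/(2σ²))`-RDP for every `γ > 1`. -/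
theorem gaussian_mechanism_rdp {D : Type*} (n : ℕ) (q : D → EuclideanSpace ℝ (Fin n))
    (adj : D → D → Prop) (σ S₂ : ℝ) (hσ : 0 < σ)
    (hS : ∀ d d', adj d d' → ‖q d - q d'‖ ≤ S₂)
    (γ : ℝ) (hγ : 1 < γ) :
    RDP (fun d => gaussianVec n (q d) (σ ^ 2)) adj γ (γ * S₂ ^ 2 / (2 * σ ^ 2)) := by
  intro d d' hadj
  rw [renyiDiv_gaussianVec n _ _ (pow_pos hσ 2) hγ.ne']
  gcongr
  exact hS d d' hadj
end

section
/- If a mechanism A on inputs in ℝ^d satisfies (ε, δ)-DP with respect to pairs of inputs differing in a single coordinate (with coordinate values bounded by c), then for pairs of inputs differing in at most k coordinates it satisfies (kε₁ + kε₂√(5 + k(ε₁+ε₂)), δ')-DP for appropriate ε₁, ε₂ as derived by iterated group privacy on the Gaussian mechanism; in particular, per-coordinate Gaussian mechanism guarantees compose over k coordinates via group privacy to give kε-type guarantees. -/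
/-!
Changing the differing coordinates one at a time joins two inputs by a path whose intermediate
inputs stay in the box, since each of their coordinates is taken from one of the endpoints.
Along the path the single-coordinate guarantees compose: `(ε₁, δ₁)` followed by `(ε₂, δ₂)` gives
`(ε₁ + ε₂, δ₁ + e^{ε₁} δ₂)`, so `k` steps give `(kε, δ ∑_{j<k} e^{jε})`, and for `ε ≥ 0` the sum
is at most `k e^{(k-1)ε}`.
-/

open MeasureTheory Finset Real

def IsDPClose {Ω : Type*} [MeasurableSpace Ω] (ε δ : ℝ) (μ ν : Measure Ω) : Prop :=
  ∀ O : Set Ω, MeasurableSet O → (μ O).toReal ≤ exp ε * (ν O).toReal + δ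

namespace IsDPClose

variable {Ω : Type*} [MeasurableSpace Ω] {ε ε₁ ε₂ δ δ₁ δ₂ : ℝ} {μ ν ρ : Measure Ω}

theorem refl (μ : Measure Ω) : IsDPClose 0 0 μ μ := by
  intro O _
  simp

theorem trans (h₁ : IsDPClose ε₁ δ₁ μ ν) (h₂ : IsDPClose ε₂ δ₂ ν ρ) :
    IsDPClose (ε₁ + ε₂) (δ₁ + exp ε₁ * δ₂) μ ρ := by
  intro O hO
  calc (μ O).toReal ≤ exp ε₁ * (ν O).toReal + δ₁ := h₁ O hO
    _ ≤ exp ε₁ * (exp ε₂ * (ρ O).toReal + δ₂) + δ₁ := by gcongr; exact h₂ O hO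
    _ = exp (ε₁ + ε₂) * (ρ O).toReal + (δ₁ + exp ε₁ * δ₂) := by rw [exp_add]; ring

theorem mono {ε' δ' : ℝ} (h : IsDPClose ε δ μ ν) (hε : ε ≤ ε') (hδ : δ ≤ δ') :
    IsDPClose ε' δ' μ ν := by
  intro O hO
  calc (μ O).toReal ≤ exp ε * (ν O).toReal + δ := h O hO
    _ ≤ exp ε' * (ν O).toReal + δ' := by gcongr

end IsDPClose

section Hamming

variable {ι : Type*} [Fintype ι] [DecidableEq ι] {β : ι → Type*} [∀ i, DecidableEq (β i)]

theorem hammingDist_update_le_one (x : ∀ i, β i) (i : ι) (v : β i) :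
    hammingDist x (Function.update x i v) ≤ 1 := by
  refine (card_le_card fun j hj => ?_).trans (card_singleton i).le
  by_contra hji
  simp_all [Function.update_of_ne (Finset.notMem_singleton.1 hji)]

theorem hammingDist_update_lt {x y : ∀ i, β i} {i : ι} (hi : x i ≠ y i) :
    hammingDist (Function.update x i (y i)) y < hammingDist x y := by
  refine card_lt_card ⟨fun j hj => ?_, fun h => ?_⟩
  · rcases eq_or_ne j i with rfl | hji
    · simp at hj
    · simpa [hji] using hj
  · simpa using h (mem_filter.2 ⟨mem_univ i, hi⟩)

theorem exists_hammingDist_le_one_of_hammingDist_le_succ {x y : ∀ i, β i} {n : ℕ}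
    (h : hammingDist x y ≤ n + 1) :
    ∃ z : ∀ i, β i, (∀ i, z i = x i ∨ z i = y i) ∧ hammingDist x z ≤ 1 ∧ hammingDist z y ≤ n := by
  obtain rfl | hxy := eq_or_ne x y
  · exact ⟨x, fun i => .inl rfl, by simp, by simp⟩
  obtain ⟨i, hi⟩ := Function.ne_iff.1 hxy
  refine ⟨Function.update x i (y i), fun j => ?_, hammingDist_update_le_one x i (y i),
    Nat.lt_succ_iff.1 ((hammingDist_update_lt hi).trans_le h)⟩
  rcases eq_or_ne j i with rfl | hji
  · simp
  · simp [hji]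

/-- Steps may stay put, so every pair at distance at most `n` is joined by exactly `n` steps. -/
theorem isDPClose_of_hammingDist_le {Ω : Type*} [MeasurableSpace Ω] {T : ∀ i, Set (β i)}
    {A : (∀ i, β i) → Measure Ω} {ε δ : ℝ}
    (hA : ∀ x ∈ Set.univ.pi T, ∀ y ∈ Set.univ.pi T, hammingDist x y ≤ 1 →
      IsDPClose ε δ (A x) (A y)) (n : ℕ) :
    ∀ x ∈ Set.univ.pi T, ∀ y ∈ Set.univ.pi T, hammingDist x y ≤ n →
      IsDPClose (n * ε) ((∑ j ∈ range n, exp (j * ε)) * δ) (A x) (A y) := by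
  induction n with
  | zero =>
    intro x _ y _ hxy
    rw [hammingDist_eq_zero.1 (Nat.le_zero.1 hxy)]
    simpa using IsDPClose.refl (A y)
  | succ n ih =>
    intro x hx y hy hxy
    obtain ⟨z, hzxy, hxz, hzy⟩ := exists_hammingDist_le_one_of_hammingDist_le_succ hxy
    have hz : z ∈ Set.univ.pi T := Set.mem_univ_pi.2 fun i =>
      (hzxy i).elim (· ▸ Set.mem_univ_pi.1 hx i) (· ▸ Set.mem_univ_pi.1 hy i)
    convert (hA x hx z hz hxz).trans (ih z hz y hy hzy) using 1
    · push_cast; ring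
    · simp only [sum_range_succ', Nat.cast_add, Nat.cast_one, add_mul, one_mul, exp_add,
        Nat.cast_zero, zero_mul, exp_zero, ← sum_mul]
      ring

end Hamming

theorem sum_range_exp_nat_mul_le {ε : ℝ} (hε : 0 ≤ ε) (n : ℕ) :
    ∑ j ∈ range n, exp (j * ε) ≤ n * exp ((n - 1) * ε) := by
  simpa using sum_le_card_nsmul (range n) (fun j : ℕ => exp (j * ε)) (exp ((n - 1) * ε))
    fun j hj => by
      have : (j : ℝ) + 1 ≤ n := by exact_mod_cast mem_range.1 hj
      gcongr
      linarith

theorem ncard_setOf_ne_eq_hammingDist {d : ℕ} (x y : EuclideanSpace ℝ (Fin d)) :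
    {i | x i ≠ y i}.ncard = hammingDist x.ofLp y.ofLp := by
  rw [hammingDist, ← Set.ncard_coe_finset]
  simp

theorem dp_group_privacy_coordinates_general {Ω : Type*} [MeasurableSpace Ω] (d : ℕ)
    (c ε δ : ℝ) (hε : 0 ≤ ε) (hδ : 0 ≤ δ)
    (A : EuclideanSpace ℝ (Fin d) → Measure Ω)
    (h1 : ∀ x x' : EuclideanSpace ℝ (Fin d), (∀ i, |x i| ≤ c) → (∀ i, |x' i| ≤ c) →
      {i | x i ≠ x' i}.Subsingleton → ∀ O : Set Ω, MeasurableSet O →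
        (A x O).toReal ≤ Real.exp ε * (A x' O).toReal + δ)
    (k : ℕ) :
    ∀ x x' : EuclideanSpace ℝ (Fin d), (∀ i, |x i| ≤ c) → (∀ i, |x' i| ≤ c) →
      {i | x i ≠ x' i}.ncard ≤ k → ∀ O : Set Ω, MeasurableSet O →
        (A x O).toReal ≤
          Real.exp (k * ε) * (A x' O).toReal + k * Real.exp (((k : ℝ) - 1) * ε) * δ := by
  intro x x' hx hx' hxx'
  have mem_box (z : EuclideanSpace ℝ (Fin d)) (hz : ∀ i, |z i| ≤ c) :
      z.ofLp ∈ Set.univ.pi fun _ => Set.Icc (-c) c :=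
    Set.mem_univ_pi.2 fun i => abs_le.1 (hz i)
  have step : ∀ y ∈ Set.univ.pi (fun _ => Set.Icc (-c) c),
      ∀ z ∈ Set.univ.pi (fun _ => Set.Icc (-c) c), hammingDist y z ≤ 1 →
        IsDPClose ε δ (A (WithLp.toLp 2 y)) (A (WithLp.toLp 2 z)) := by
    intro y hy z hz hyz
    refine h1 _ _ (fun i => abs_le.2 (Set.mem_univ_pi.1 hy i))
      (fun i => abs_le.2 (Set.mem_univ_pi.1 hz i)) ?_
    rw [← Set.ncard_le_one_iff_subsingleton, ncard_setOf_ne_eq_hammingDist]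
    exact hyz
  have chain := isDPClose_of_hammingDist_le step k x.ofLp (mem_box x hx) x'.ofLp (mem_box x' hx')
    (ncard_setOf_ne_eq_hammingDist x x' ▸ hxx')
  simp only [WithLp.toLp_ofLp] at chain
  exact chain.mono le_rfl (by gcongr; exact sum_range_exp_nat_mul_le hε k)

/-- Group privacy over coordinates: if a mechanism `A` on inputs in `ℝ^d` (with coordinate
values bounded by `c`) satisfies `(ε,δ)`-DP with respect to pairs of inputs differing in a
single coordinate, then for pairs of inputs differing in at most `k` coordinates it
satisfies a `(kε, k e^{(k-1)ε} δ)`-type guarantee; in particular, per-coordinate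
Gaussian-mechanism guarantees compose over `k` coordinates via group privacy. -/
theorem dp_group_privacy_coordinates {Ω : Type*} [MeasurableSpace Ω] (d : ℕ)
    (c ε δ : ℝ) (hc : 0 < c) (hε : 0 ≤ ε) (hδ : 0 ≤ δ)
    (A : EuclideanSpace ℝ (Fin d) → Measure Ω)
    (h1 : ∀ x x' : EuclideanSpace ℝ (Fin d), (∀ i, |x i| ≤ c) → (∀ i, |x' i| ≤ c) →
      {i | x i ≠ x' i}.Subsingleton → ∀ O : Set Ω, MeasurableSet O →
        (A x O).toReal ≤ Real.exp ε * (A x' O).toReal + δ)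
    (k : ℕ) (hk : 1 ≤ k) :
    ∀ x x' : EuclideanSpace ℝ (Fin d), (∀ i, |x i| ≤ c) → (∀ i, |x' i| ≤ c) →
      {i | x i ≠ x' i}.ncard ≤ k → ∀ O : Set Ω, MeasurableSet O →
        (A x O).toReal ≤
          Real.exp (k * ε) * (A x' O).toReal + k * Real.exp (((k : ℝ) - 1) * ε) * δ :=
  dp_group_privacy_coordinates_general d c ε δ hε hδ A h1 k
end
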